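/- Let ϕ : ℝ² → ℝ be smooth near 0 with ϕ₂ ≡ 0 and ϕ₃ ≡ 0, and suppose ϕ₄ ≢ 0 with 𝔫(ϕ₄) ≥ 3. Then h_lin(ϕ) > 2, and hence h(ϕ) > 2. -/

import Mathlib

open MeasureTheory Filter Metric Set
open scoped Topology ENNReal NNReal RealInnerProductSpace

noncomputable section

/-! ### Newton polygon machinery in two dimensions -/

/-- the partial derivative `∂₁ f` -/
def pd1 (f : ℝ × ℝ → ℝ) : ℝ × ℝ → ℝ := fun x => fderiv ℝ f x (1, 0)

/-- the partial derivative `∂₂ f` -/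
def pd2 (f : ℝ × ℝ → ℝ) : ℝ × ℝ → ℝ := fun x => fderiv ℝ f x (0, 1)

/-- the iterated partial derivative `∂₁^{α₁} ∂₂^{α₂} f` -/
def pD (α : ℕ × ℕ) (f : ℝ × ℝ → ℝ) : ℝ × ℝ → ℝ := pd1^[α.1] (pd2^[α.2] f)

/-- the Taylor support of `f` at the origin -/
def taylorSupport (f : ℝ × ℝ → ℝ) : Set (ℕ × ℕ) := {α : ℕ × ℕ | α ≠ 0 ∧ pD α f 0 ≠ 0}

/-- the Newton polygon of `f` at the origin -/
def newtonPolygon (f : ℝ × ℝ → ℝ) : Set (ℝ × ℝ) :=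
  convexHull ℝ (⋃ α ∈ taylorSupport f, {t : ℝ × ℝ | (α.1 : ℝ) ≤ t.1 ∧ (α.2 : ℝ) ≤ t.2})

/-- the Newton distance of `f` at the origin -/
def newtonDist (f : ℝ × ℝ → ℝ) : ℝ := sInf {t : ℝ | 0 < t ∧ (t, t) ∈ newtonPolygon f}

/-- a smooth local coordinate change at the origin of `ℝ²` -/
def IsLocalCoordChange (y : ℝ × ℝ → ℝ × ℝ) : Prop :=
  y 0 = 0 ∧ ∃ U V : Set (ℝ × ℝ), IsOpen U ∧ IsOpen V ∧ (0 : ℝ × ℝ) ∈ U ∧ (0 : ℝ × ℝ) ∈ V ∧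
    ContDiffOn ℝ (⊤ : ℕ∞) y U ∧ MapsTo y U V ∧ ∃ z : ℝ × ℝ → ℝ × ℝ,
      ContDiffOn ℝ (⊤ : ℕ∞) z V ∧ MapsTo z V U ∧
      (∀ x ∈ U, z (y x) = x) ∧ (∀ x ∈ V, y (z x) = x)

/-- the height `h(f)` of `f` -/
def height (f : ℝ × ℝ → ℝ) : ℝ :=
  sSup {d : ℝ | ∃ y : ℝ × ℝ → ℝ × ℝ, IsLocalCoordChange y ∧ d = newtonDist (f ∘ y)}

/-- the linear height `h_lin(f)` of `f` -/
def linHeight (f : ℝ × ℝ → ℝ) : ℝ :=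
  sSup {d : ℝ | ∃ L : (ℝ × ℝ) ≃ₗ[ℝ] ℝ × ℝ, d = newtonDist (f ∘ L)}

/-- the degree `j` homogeneous part of the Taylor series of `f` at the origin -/
def homPart (f : ℝ × ℝ → ℝ) (j : ℕ) : ℝ × ℝ → ℝ := fun x =>
  ∑ α ∈ Finset.HasAntidiagonal.antidiagonal j,
    (pD α f 0 / ((α.1.factorial : ℝ) * (α.2.factorial : ℝ))) * x.1 ^ α.1 * x.2 ^ α.2

/-- the order of vanishing of `P` restricted to the unit circle, at the point
`(cos θ, sin θ)` -/
def circVanish (P : ℝ × ℝ → ℝ) (θ : ℝ) : ℕ∞ :=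
  sSup {k : ℕ∞ | ∀ j : ℕ, (j : ℕ∞) < k →
    iteratedDeriv j (fun t => P (Real.cos t, Real.sin t)) θ = 0}

/-- `𝔫(P)`: the maximal order of vanishing of `P` along the unit circle -/
def nmax (P : ℝ × ℝ → ℝ) : ℕ∞ := ⨆ θ : ℝ, circVanish P θ

/-! ### `D`-type singularities -/

/-- the data of a normal form of a `D_{n+1}`-type singularity (`n = ⊤` means `D_∞`):
after the linear change of variables `L`, on an `ε`-ball around the origin,
`ϕ = b(x)·(x₂ - x₁^m ω(x₁))² + b₀(x₁)` with `b(0,0) = 0`, `∂₁b(0,0) ≠ 0`, `∂₂b(0,0) = 0`,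
`ω(0) ≠ 0`, and `b₀(x₁) = x₁ⁿ β(x₁)`, `β(0) ≠ 0` (case `n < ∞`), or `b₀` flat (case `n = ⊤`). -/
def DSingData (ϕ : ℝ × ℝ → ℝ) (m : ℕ) (n : ℕ∞) (L : (ℝ × ℝ) ≃ₗ[ℝ] ℝ × ℝ)
    (b : ℝ × ℝ → ℝ) (b0 ω : ℝ → ℝ) (ε : ℝ) : Prop :=
  0 < ε ∧ ContDiffOn ℝ (⊤ : ℕ∞) b (ball 0 ε) ∧ ContDiffOn ℝ (⊤ : ℕ∞) b0 (ball 0 ε) ∧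
    ContDiffOn ℝ (⊤ : ℕ∞) ω (ball 0 ε) ∧
    (∀ x ∈ ball (0 : ℝ × ℝ) ε, ϕ (L x) = b x * (x.2 - x.1 ^ m * ω x.1) ^ 2 + b0 x.1) ∧
    b 0 = 0 ∧ pd1 b 0 ≠ 0 ∧ pd2 b 0 = 0 ∧ ω 0 ≠ 0 ∧
    ((∃ n' : ℕ, n = (n' : ℕ∞) ∧ ∃ β : ℝ → ℝ, ContDiffOn ℝ (⊤ : ℕ∞) β (ball 0 ε) ∧ β 0 ≠ 0 ∧
        ∀ x₁ ∈ ball (0 : ℝ) ε, b0 x₁ = x₁ ^ n' * β x₁) ∨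
      (n = ⊤ ∧ ∀ j : ℕ, iteratedDeriv j b0 0 = 0))

/-- `ϕ` has a singularity of type `D_{n+1}` with parameters `(m, n)` -/
def DSing (ϕ : ℝ × ℝ → ℝ) (m : ℕ) (n : ℕ∞) : Prop :=
  2 ≤ m ∧ 3 ≤ n ∧ ∃ (L : (ℝ × ℝ) ≃ₗ[ℝ] ℝ × ℝ) (b : ℝ × ℝ → ℝ) (b0 ω : ℝ → ℝ) (ε : ℝ),
    DSingData ϕ m n L b b0 ω ε

/-- `ϕ` has a singularity of type `D_{n+1}` with parameters `(m, n)` and satisfies the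
`R`-condition: `b₀ ≡ 0` in the case `n = ∞`. -/
def DSingR (ϕ : ℝ × ℝ → ℝ) (m : ℕ) (n : ℕ∞) : Prop :=
  2 ≤ m ∧ 3 ≤ n ∧ ∃ (L : (ℝ × ℝ) ≃ₗ[ℝ] ℝ × ℝ) (b : ℝ × ℝ → ℝ) (b0 ω : ℝ → ℝ) (ε : ℝ),
    DSingData ϕ m n L b b0 ω ε ∧ (n = ⊤ → ∀ x₁ : ℝ, b0 x₁ = 0)

/-- the real value of `n ∈ ℕ∞`, with `∞ ↦ 0` (so that `c / enr ∞ = 0`, matching the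
convention that terms with `n` in the denominator are interpreted as `0` for `n = ∞`). -/
def enr (n : ℕ∞) : ℝ := (WithTop.untopD 0 n : ℕ)

/-! ### Convolution operators with oscillatory kernels -/

/-- Euclidean space `ℝ^N` -/
abbrev Ed (N : ℕ) : Type := EuclideanSpace ℝ (Fin N)

/-- an amplitude of order `-k`: smooth and homogeneous of degree `-k` for `‖ξ‖ ≥ 1` -/
def IsAmplitude {N : ℕ} (k : ℝ) (a : Ed N → ℂ) : Prop :=
  ContDiff ℝ (⊤ : ℕ∞) a ∧
    ∀ ξ : Ed N, 1 ≤ ‖ξ‖ → ∀ t : ℝ, 1 ≤ t → a (t • ξ) = ((t ^ (-k) : ℝ) : ℂ) * a ξ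

/-- the convolution operator `M_k u = F⁻¹(e^{iφ} a (F u))` on Schwartz functions -/
def Mop {N : ℕ} (φ : Ed N → ℝ) (a : Ed N → ℂ) (u : SchwartzMap (Ed N) ℂ) : Ed N → ℂ :=
  VectorFourier.fourierIntegral Real.fourierChar volume (-innerₗ (Ed N))
    (fun ξ => Complex.exp (Complex.I * (φ ξ : ℂ)) * a ξ *
      VectorFourier.fourierIntegral Real.fourierChar volume (innerₗ (Ed N)) (fun x => u x) ξ)

/-- the operator `M_k` (with phase `φ` and amplitude `a`) is `L^p → L^q` bounded -/
def IsLpBdd {N : ℕ} (φ : Ed N → ℝ) (a : Ed N → ℂ) (p q : ℝ≥0∞) : Prop :=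
  ∃ C : ℝ≥0, ∀ u : SchwartzMap (Ed N) ℂ,
    eLpNorm (Mop φ a u) q volume ≤ (C : ℝ≥0∞) * eLpNorm (fun x => u x) p volume

/-- `Γ` is a conic neighborhood of `v` (contained in `ℝ^N ∖ {0}`) -/
def IsConicNbhd {N : ℕ} (Γ : Set (Ed N)) (v : Ed N) : Prop :=
  IsOpen Γ ∧ v ∈ Γ ∧ (0 : Ed N) ∉ Γ ∧ ∀ ξ ∈ Γ, ∀ t : ℝ, 0 < t → t • ξ ∈ Γ

/-- the local exponent `k_p(v)`, for the pair of conjugate exponents `(p, q)` -/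
def kpLoc {N : ℕ} (φ : Ed N → ℝ) (v : Ed N) (p q : ℝ≥0∞) : ℝ :=
  sInf {k : ℝ | 0 < k ∧ ∃ Γ : Set (Ed N), IsConicNbhd Γ v ∧
    ∀ a : Ed N → ℂ, IsAmplitude k a → Function.support a ⊆ Γ → IsLpBdd φ a p q}

/-- the global exponent `k_p(Σ)`, for the pair of conjugate exponents `(p, q)` -/
def kpGlob {N : ℕ} (φ : Ed N → ℝ) (p q : ℝ≥0∞) : ℝ :=
  sInf {k : ℝ | 0 < k ∧ ∀ a : Ed N → ℂ, IsAmplitude k a → IsLpBdd φ a p q}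

/-- `φ` is smooth away from the origin, positive away from the origin, and positively
homogeneous of degree one -/
def PhiHyp {N : ℕ} (φ : Ed N → ℝ) : Prop :=
  ContDiffOn ℝ (⊤ : ℕ∞) φ {(0 : Ed N)}ᶜ ∧ (∀ ξ : Ed N, ξ ≠ 0 → 0 < φ ξ) ∧
    ∀ t : ℝ, 0 < t → ∀ ξ : Ed N, ξ ≠ 0 → φ (t • ξ) = t * φ ξ

/-- the point `v = (0, 0, 1) ∈ ℝ³` -/
def vpt : Ed 3 := (WithLp.equiv 2 (Fin 3 → ℝ)).symm ![0, 0, 1]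

/-- the point `(x₁, x₂, 1 + ϕ(x₁, x₂)) ∈ ℝ³` -/
def graphPt (ϕ : ℝ × ℝ → ℝ) (x : ℝ × ℝ) : Ed 3 :=
  (WithLp.equiv 2 (Fin 3 → ℝ)).symm ![x.1, x.2, 1 + ϕ x]

/-- near `v = (0,0,1)`, the surface `Σ = {φ = 1}` is the graph of `1 + ϕ` over a
neighborhood `U` of the origin, where `ϕ` is smooth with `ϕ(0,0) = 0`, `∇ϕ(0,0) = 0` -/
def GraphAt (φ : Ed 3 → ℝ) (ϕ : ℝ × ℝ → ℝ) : Prop :=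
  ∃ U ∈ 𝓝 (0 : ℝ × ℝ), ContDiffOn ℝ (⊤ : ℕ∞) ϕ U ∧ ϕ 0 = 0 ∧ fderiv ℝ ϕ 0 = 0 ∧
    ∃ W : Set (Ed 3), IsOpen W ∧ vpt ∈ W ∧ {ξ ∈ W | φ ξ = 1} = graphPt ϕ '' U

/-- the height `h(Σ)` of the surface `Σ = {φ = 1}`: the supremum over points `v ∈ Σ` of the
heights of graph functions of `Σ` at `v`, obtained after a linear change of variables of `ℝ³`
moving `v` to `(0,0,1)` -/
def hSurf (φ : Ed 3 → ℝ) : ℝ :=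
  sSup {h : ℝ | ∃ v : Ed 3, φ v = 1 ∧ ∃ A : Ed 3 ≃ₗ[ℝ] Ed 3, A v = vpt ∧
    ∃ ϕ : ℝ × ℝ → ℝ, GraphAt (φ ∘ A.symm) ϕ ∧ h = height ϕ}

/-- the point `(x, 1 + ϕ(x)) ∈ ℝ^{d+1}` for `x ∈ ℝ^d` -/
def graphPtN {d : ℕ} (ϕ : Ed d → ℝ) (x : Ed d) : Ed (d + 1) :=
  (WithLp.equiv 2 (Fin (d + 1) → ℝ)).symm
    (Fin.snoc ((WithLp.equiv 2 (Fin d → ℝ)) x) (1 + ϕ x))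

/-- the point `v = (0, …, 0, 1) ∈ ℝ^{d+1}` -/
def vptN (d : ℕ) : Ed (d + 1) :=
  (WithLp.equiv 2 (Fin (d + 1) → ℝ)).symm (Fin.snoc (fun _ : Fin d => (0 : ℝ)) 1)

/-- the oscillatory integral `I(λ, s) = ∫ e^{iλ(ϕ(x) + s·x)} g(x) dx` over `ℝ^d` -/
def oscI {d : ℕ} (ϕ : Ed d → ℝ) (g : Ed d → ℂ) (l : ℝ) (s : Ed d) : ℂ :=
  ∫ x : Ed d, Complex.exp (Complex.I * ((l * (ϕ x + ⟪s, x⟫) : ℝ) : ℂ)) * g x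

/-- the oscillatory integral `I(λ, s)` in two dimensions, with `ℝ²` realised as `ℝ × ℝ` -/
def oscI2 (ϕ : ℝ × ℝ → ℝ) (g : ℝ × ℝ → ℂ) (l : ℝ) (s : ℝ × ℝ) : ℂ :=
  ∫ x : ℝ × ℝ, Complex.exp (Complex.I * ((l * (ϕ x + s.1 * x.1 + s.2 * x.2) : ℝ) : ℂ)) * g x

/-!
Rotate the plane so that the point of the unit circle where `ϕ₄` vanishes to order three
becomes `(1, 0)`. Then `ϕ₄` is divisible by `x₂³`, so the Taylor support of the rotated function
contains only `(1, 3)`, `(0, 4)` (one of which is present since `ϕ₄ ≢ 0`) and multi-indices of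
degree at least five; all of them satisfy `3 α₁ + 4 α₂ ≥ 15`, so the Newton distance is at least
`15 / 7 > 2`.

The suprema defining the heights are bounded by `4`: if some coordinate change `y` gave a Taylor
support avoiding `[0, 4]²`, then `ϕ ∘ y` would be flat to order four, hence `o(‖x‖⁴)`; so would
be `ϕ`, and differentiating `t ↦ ϕ (t • v)` four times at `0` would give `ϕ₄ = 0`.
-/

open scoped ContDiff
open Real Asymptotics Finset.HasAntidiagonal

section DirDeriv

variable {E F : Type*} [NormedAddCommGroup E] [NormedSpace ℝ E]
  [NormedAddCommGroup F] [NormedSpace ℝ F] {U : Set E} {f g : E → F} {x : E}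

def dirDeriv (v : E) (f : E → F) : E → F := fun x => fderiv ℝ f x v

theorem ContDiffOn.differentiableAt_of_isOpen (hf : ContDiffOn ℝ ∞ f U) (hU : IsOpen U)
    (hx : x ∈ U) : DifferentiableAt ℝ f x :=
  (hf.differentiableOn (by simp)).differentiableAt (hU.mem_nhds hx)

theorem contDiffOn_dirDeriv (hf : ContDiffOn ℝ ∞ f U) (hU : IsOpen U) (v : E) :
    ContDiffOn ℝ ∞ (dirDeriv v f) U :=
  (hf.fderiv_of_isOpen hU (by simp)).clm_apply contDiffOn_const

theorem contDiffOn_iterate_dirDeriv (hf : ContDiffOn ℝ ∞ f U) (hU : IsOpen U) (v : E)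
    (n : ℕ) : ContDiffOn ℝ ∞ ((dirDeriv v)^[n] f) U := by
  induction n with
  | zero => exact hf
  | succ n ih => rw [Function.iterate_succ_apply']; exact contDiffOn_dirDeriv ih hU v

theorem eqOn_dirDeriv (h : EqOn f g U) (hU : IsOpen U) (v : E) :
    EqOn (dirDeriv v f) (dirDeriv v g) U := fun x hx => by
  simp only [dirDeriv, (h.eventuallyEq_of_mem (hU.mem_nhds hx)).fderiv_eq]

theorem eqOn_iterate_dirDeriv (h : EqOn f g U) (hU : IsOpen U) (v : E) (n : ℕ) :
    EqOn ((dirDeriv v)^[n] f) ((dirDeriv v)^[n] g) U := by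
  induction n with
  | zero => exact h
  | succ n ih => simp only [Function.iterate_succ_apply']; exact eqOn_dirDeriv ih hU v

theorem dirDeriv_comm (hf : ContDiffOn ℝ ∞ f U) (hU : IsOpen U) (hx : x ∈ U) (v w : E) :
    dirDeriv v (dirDeriv w f) x = dirDeriv w (dirDeriv v f) x := by
  have hfx : ContDiffAt ℝ ∞ f x := hf.contDiffAt (hU.mem_nhds hx)
  have hdiff : DifferentiableAt ℝ (fderiv ℝ f) x :=
    (hfx.fderiv_right (m := 1) (by decide)).differentiableAt one_ne_zero
  have hsymm := hfx.isSymmSndFDerivAt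
    (by simp only [minSmoothness_of_isRCLikeNormedField]; decide) v w
  change fderiv ℝ (fun y => fderiv ℝ f y w) x v = fderiv ℝ (fun y => fderiv ℝ f y v) x w
  rw [fderiv_clm_apply hdiff (differentiableAt_const _),
    fderiv_clm_apply hdiff (differentiableAt_const _)]
  simpa using hsymm

theorem iterate_dirDeriv_comm (hf : ContDiffOn ℝ ∞ f U) (hU : IsOpen U) (v w : E) (n : ℕ) :
    EqOn ((dirDeriv w)^[n] (dirDeriv v f)) (dirDeriv v ((dirDeriv w)^[n] f)) U := by
  induction n with
  | zero => exact fun _ _ => rfl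
  | succ n ih =>
    intro x hx
    simp only [Function.iterate_succ_apply']
    rw [eqOn_dirDeriv ih hU w hx, dirDeriv_comm (contDiffOn_iterate_dirDeriv hf hU w n) hU hx]

theorem dirDeriv_fun_sum {ι : Type*} {s : Finset ι} {u : ι → E → ℝ}
    (hu : ∀ i ∈ s, DifferentiableAt ℝ (u i) x) (c : ι → ℝ) (v : E) :
    dirDeriv v (fun y => ∑ i ∈ s, c i * u i y) x = ∑ i ∈ s, c i * dirDeriv v (u i) x := by
  simp only [dirDeriv]
  rw [fderiv_fun_sum (A := fun i y => c i * u i y) fun i hi => (hu i hi).const_mul (c i),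
    FunLike.coe_sum, Finset.sum_apply]
  refine Finset.sum_congr rfl fun i hi => ?_
  rw [fderiv_const_mul (hu i hi)]
  rfl

theorem dirDeriv_comp_clm (L : E →L[ℝ] E) (hf : DifferentiableAt ℝ f (L x)) (v : E) :
    dirDeriv v (f ∘ L) x = dirDeriv (L v) f (L x) := by
  simp [dirDeriv, fderiv_comp x hf L.differentiableAt]

theorem iterate_dirDeriv_comp_clm (L : E →L[ℝ] E) (hf : ContDiffOn ℝ ∞ f U) (hU : IsOpen U)
    (v : E) (n : ℕ) :
    EqOn ((dirDeriv v)^[n] (f ∘ L)) ((dirDeriv (L v))^[n] f ∘ L) (L ⁻¹' U) := by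
  induction n with
  | zero => exact fun _ _ => rfl
  | succ n ih =>
    intro x hx
    simp only [Function.iterate_succ_apply']
    rw [eqOn_dirDeriv ih (hU.preimage L.continuous) v hx, Function.comp_apply,
      dirDeriv_comp_clm L ((contDiffOn_iterate_dirDeriv hf hU (L v) n).differentiableAt_of_isOpen
        hU hx) v]

theorem hasDerivAt_comp_smul {v : E} {t : ℝ} (hf : DifferentiableAt ℝ f (t • v)) :
    HasDerivAt (fun s : ℝ => f (s • v)) (dirDeriv v f (t • v)) t := by
  have := hf.hasFDerivAt.comp_hasDerivAt t ((hasDerivAt_id t).smul_const v)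
  rw [one_smul] at this
  exact this

theorem iteratedDeriv_comp_smul (hf : ContDiffOn ℝ ∞ f U) (hU : IsOpen U) (v : E) (n : ℕ)
    {t : ℝ} (ht : t • v ∈ U) :
    iteratedDeriv n (fun s : ℝ => f (s • v)) t = (dirDeriv v)^[n] f (t • v) := by
  induction n generalizing t with
  | zero => rfl
  | succ n ih =>
    have hopen : IsOpen {s : ℝ | s • v ∈ U} := hU.preimage (continuous_id.smul continuous_const)
    have heq : iteratedDeriv n (fun s : ℝ => f (s • v)) =ᶠ[𝓝 t]
        fun s => (dirDeriv v)^[n] f (s • v) :=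
      Filter.eventually_of_mem (hopen.mem_nhds ht) fun s hs => ih hs
    rw [iteratedDeriv_succ, heq.deriv_eq, Function.iterate_succ_apply']
    exact (hasDerivAt_comp_smul
      ((contDiffOn_iterate_dirDeriv hf hU v n).differentiableAt_of_isOpen hU ht)).deriv

end DirDeriv

section PartialDeriv

variable {U : Set (ℝ × ℝ)} {f : ℝ × ℝ → ℝ}

theorem dirDeriv_eq_pd (v : ℝ × ℝ) (g : ℝ × ℝ → ℝ) (x : ℝ × ℝ) :
    dirDeriv v g x = v.1 * pd1 g x + v.2 * pd2 g x := by
  have hv : v = v.1 • ((1, 0) : ℝ × ℝ) + v.2 • (0, 1) := by ext <;> simp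
  rw [dirDeriv, hv, map_add, map_smul, map_smul]
  simp [pd1, pd2]

theorem fderiv_eq_pd (g : ℝ × ℝ → ℝ) (x : ℝ × ℝ) :
    fderiv ℝ g x = pd1 g x • ContinuousLinearMap.fst ℝ ℝ ℝ
      + pd2 g x • ContinuousLinearMap.snd ℝ ℝ ℝ := by
  ext <;> simp [pd1, pd2]

theorem contDiffOn_pD (hf : ContDiffOn ℝ ∞ f U) (hU : IsOpen U) (α : ℕ × ℕ) :
    ContDiffOn ℝ ∞ (pD α f) U :=
  contDiffOn_iterate_dirDeriv (contDiffOn_iterate_dirDeriv hf hU _ _) hU _ _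

theorem pd1_pD (i j : ℕ) : pd1 (pD (i, j) f) = pD (i + 1, j) f :=
  (Function.iterate_succ_apply' pd1 i _).symm

theorem pD_pd2 (i j : ℕ) : pD (i, j) (pd2 f) = pD (i, j + 1) f := rfl

theorem pd2_pD (hf : ContDiffOn ℝ ∞ f U) (hU : IsOpen U) (i j : ℕ) :
    EqOn (pd2 (pD (i, j) f)) (pD (i, j + 1) f) U := fun x hx => by
  rw [pD, pD, Function.iterate_succ_apply' pd2]
  exact (iterate_dirDeriv_comm (contDiffOn_iterate_dirDeriv hf hU (0, 1) j) hU
    (0, 1) (1, 0) i).symm hx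

theorem pD_pd1 (hf : ContDiffOn ℝ ∞ f U) (hU : IsOpen U) (i j : ℕ) :
    EqOn (pD (i, j) (pd1 f)) (pD (i + 1, j) f) U :=
  eqOn_iterate_dirDeriv (iterate_dirDeriv_comm hf hU (1, 0) (0, 1) j) hU (1, 0) i

theorem dirDeriv_pD (hf : ContDiffOn ℝ ∞ f U) (hU : IsOpen U) {x : ℝ × ℝ} (hx : x ∈ U)
    (v : ℝ × ℝ) (i j : ℕ) :
    dirDeriv v (pD (i, j) f) x = v.1 * pD (i + 1, j) f x + v.2 * pD (i, j + 1) f x := by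
  rw [dirDeriv_eq_pd, pd1_pD, pd2_pD hf hU i j hx]

theorem iterate_dirDeriv_eq_sum (hf : ContDiffOn ℝ ∞ f U) (hU : IsOpen U) (v : ℝ × ℝ)
    (n : ℕ) :
    EqOn ((dirDeriv v)^[n] f)
      (fun x => ∑ α ∈ antidiagonal n, (n.choose α.1 * v.1 ^ α.1 * v.2 ^ α.2 : ℝ) * pD α f x)
      U := by
  induction n with
  | zero => intro x _; simp [pD]
  | succ n ih =>
    intro x hx
    rw [Function.iterate_succ_apply', eqOn_dirDeriv ih hU v hx, dirDeriv_fun_sum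
      fun α _ => (contDiffOn_pD hf hU α).differentiableAt_of_isOpen hU hx]
    calc _ = ∑ α ∈ antidiagonal n, (n.choose α.1 : ℝ) * (v.1 ^ α.1 * v.2 ^ (α.2 + 1) *
            pD (α.1, α.2 + 1) f x) + ∑ α ∈ antidiagonal n, (n.choose α.2 : ℝ) *
            (v.1 ^ (α.1 + 1) * v.2 ^ α.2 * pD (α.1 + 1, α.2) f x) := by
          rw [← Finset.sum_add_distrib]
          refine Finset.sum_congr rfl fun α hα => ?_
          rw [Nat.choose_symm_of_eq_add (mem_antidiagonal.1 hα).symm, dirDeriv_pD hf hU hx]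
          ring
      _ = _ := by
          rw [← Finset.sum_antidiagonal_choose_succ_mul
            (fun i j => v.1 ^ i * v.2 ^ j * pD (i, j) f x)]
          exact Finset.sum_congr rfl fun α _ => by ring

theorem homPart_eq_iterate_dirDeriv (hf : ContDiffOn ℝ ∞ f U) (hU : IsOpen U)
    (hU0 : (0 : ℝ × ℝ) ∈ U) (n : ℕ) (v : ℝ × ℝ) :
    homPart f n v = (dirDeriv v)^[n] f 0 / n.factorial := by
  rw [iterate_dirDeriv_eq_sum hf hU v n hU0, Finset.sum_div, homPart]
  refine Finset.sum_congr rfl fun α hα => ?_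
  obtain rfl := mem_antidiagonal.1 hα
  rw [Nat.cast_add_choose]
  field_simp

theorem homPart_comp_clm (hf : ContDiffOn ℝ ∞ f U) (hU : IsOpen U) (hU0 : (0 : ℝ × ℝ) ∈ U)
    (L : (ℝ × ℝ) →L[ℝ] ℝ × ℝ) (n : ℕ) : homPart (f ∘ L) n = homPart f n ∘ L := by
  have hL0 : (0 : ℝ × ℝ) ∈ L ⁻¹' U := by simpa using hU0
  ext v
  rw [homPart_eq_iterate_dirDeriv (hf.comp L.contDiff.contDiffOn (mapsTo_preimage _ _))
      (hU.preimage L.continuous) hL0, iterate_dirDeriv_comp_clm L hf hU v n hL0,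
    Function.comp_apply, Function.comp_apply, map_zero, homPart_eq_iterate_dirDeriv hf hU hU0]

theorem homPart_eq_zero_iff {n : ℕ} :
    homPart f n = 0 ↔ ∀ α ∈ antidiagonal n, pD α f 0 = 0 := by
  refine ⟨fun h α hα => ?_, fun h => funext fun x => Finset.sum_eq_zero fun α hα => by
    simp [h α hα]⟩
  set c : ℕ → ℝ := fun i => pD (i, n - i) f 0 / (i.factorial * (n - i).factorial)
  have hp : ∑ i ∈ Finset.range (n + 1), Polynomial.C (c i) * Polynomial.X ^ i = 0 := by
    refine Polynomial.funext fun x => ?_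
    have hx := congrFun h (x, 1)
    rw [homPart, Finset.Nat.sum_antidiagonal_eq_sum_range_succ_mk] at hx
    simp only [Polynomial.eval_finsetSum, Polynomial.eval_mul, Polynomial.eval_C,
      Polynomial.eval_pow, Polynomial.eval_X, Polynomial.eval_zero, c]
    simpa [mul_comm] using hx
  obtain ⟨i, j⟩ := α
  obtain rfl : j = n - i := by have := mem_antidiagonal.1 hα; omega
  have hi : i < n + 1 := by have := mem_antidiagonal.1 hα; omega
  have hci := congrArg (Polynomial.coeff · i) hp
  simp only [Polynomial.finsetSum_coeff, Polynomial.coeff_C_mul_X_pow,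
    Polynomial.coeff_zero, c] at hci
  simpa [Nat.factorial_ne_zero, hi] using hci

end PartialDeriv

section Circle

def quarticOnCircle (a b c d e t : ℝ) : ℝ :=
  a * cos t ^ 4 + b * (cos t ^ 3 * sin t) + c * (cos t ^ 2 * sin t ^ 2)
    + d * (cos t * sin t ^ 3) + e * sin t ^ 4

theorem quarticOnCircle_zero (a b c d e : ℝ) : quarticOnCircle a b c d e 0 = a := by
  simp [quarticOnCircle]

theorem deriv_quarticOnCircle (a b c d e : ℝ) :
    deriv (quarticOnCircle a b c d e)
      = quarticOnCircle b (2 * c - 4 * a) (3 * d - 3 * b) (4 * e - 2 * c) (-d) := by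
  ext t
  have hc := hasDerivAt_cos t
  have hs := hasDerivAt_sin t
  refine ((((((hc.pow 4).const_mul a).add (((hc.pow 3).mul hs).const_mul b)).add
    (((hc.pow 2).mul (hs.pow 2)).const_mul c)).add ((hc.mul (hs.pow 3)).const_mul d)).add
    ((hs.pow 4).const_mul e)).deriv.trans ?_
  simp only [quarticOnCircle, Pi.pow_apply]
  ring

theorem homPart_four_circle (f : ℝ × ℝ → ℝ) :
    (fun t => homPart f 4 (cos t, sin t)) = quarticOnCircle (pD (4, 0) f 0 / 24)
      (pD (3, 1) f 0 / 6) (pD (2, 2) f 0 / 4) (pD (1, 3) f 0 / 6) (pD (0, 4) f 0 / 24) := by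
  ext t
  simp [homPart, quarticOnCircle, Finset.Nat.sum_antidiagonal_eq_sum_range_succ_mk,
    Finset.sum_range_succ, Nat.factorial]
  ring

theorem pD_eq_zero_of_homPart_four_circle {f : ℝ × ℝ → ℝ}
    (h : ∀ j < 3, iteratedDeriv j (fun t => homPart f 4 (cos t, sin t)) 0 = 0) :
    pD (4, 0) f 0 = 0 ∧ pD (3, 1) f 0 = 0 ∧ pD (2, 2) f 0 = 0 := by
  have h0 := h 0 (by norm_num)
  have h1 := h 1 (by norm_num)
  have h2 := h 2 (by norm_num)
  simp only [homPart_four_circle, iteratedDeriv_zero, iteratedDeriv_succ,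
    deriv_quarticOnCircle, quarticOnCircle_zero] at h0 h1 h2
  exact ⟨by linarith, by linarith, by linarith⟩

theorem exists_iteratedDeriv_eq_zero_of_le_nmax {P : ℝ × ℝ → ℝ} {k : ℕ}
    (h : (k : ℕ∞) ≤ nmax P) :
    ∃ θ : ℝ, ∀ j < k, iteratedDeriv j (fun t => P (cos t, sin t)) θ = 0 := by
  by_contra! hne
  have hk : 1 ≤ k := by obtain ⟨j, hj, -⟩ := hne 0; omega
  have hle : nmax P ≤ ((k - 1 : ℕ) : ℕ∞) := by
    refine iSup_le fun θ => sSup_le fun m hm => ?_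
    obtain ⟨j, hj, hj0⟩ := hne θ
    refine le_trans (not_lt.1 fun hjm => hj0 (hm j hjm)) ?_
    exact_mod_cast (by omega : j ≤ k - 1)
  have := Nat.cast_le.1 (h.trans hle)
  omega

def planeRotation (θ : ℝ) : (ℝ × ℝ) ≃ₗ[ℝ] ℝ × ℝ where
  toFun x := (cos θ * x.1 - sin θ * x.2, sin θ * x.1 + cos θ * x.2)
  invFun x := (cos θ * x.1 + sin θ * x.2, -sin θ * x.1 + cos θ * x.2)
  map_add' x y := by ext <;> simp <;> ring
  map_smul' c x := by ext <;> simp <;> ring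
  left_inv x := by
    ext
    · linear_combination x.1 * sin_sq_add_cos_sq θ
    · linear_combination x.2 * sin_sq_add_cos_sq θ
  right_inv x := by
    ext
    · linear_combination x.1 * sin_sq_add_cos_sq θ
    · linear_combination x.2 * sin_sq_add_cos_sq θ

theorem planeRotation_cos_sin (θ t : ℝ) :
    planeRotation θ (cos t, sin t) = (cos (θ + t), sin (θ + t)) := by
  ext
  · simp [planeRotation, cos_add]
  · simp [planeRotation, sin_add]

end Circle

section NewtonPolygon

variable {f : ℝ × ℝ → ℝ}

theorem max_pos_of_mem_taylorSupport {α : ℕ × ℕ} (hα : α ∈ taylorSupport f) :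
    0 < max α.1 α.2 := by
  by_contra! h
  exact hα.1 (Prod.ext (Nat.le_zero.1 (le_of_max_le_left h))
    (Nat.le_zero.1 (le_of_max_le_right h)))

theorem max_mem_newtonDist_set {α : ℕ × ℕ} (hα : α ∈ taylorSupport f) :
    ((max α.1 α.2 : ℕ) : ℝ) ∈ {t : ℝ | 0 < t ∧ (t, t) ∈ newtonPolygon f} := by
  refine ⟨by exact_mod_cast max_pos_of_mem_taylorSupport hα,
    subset_convexHull ℝ _ (mem_iUnion₂.2 ⟨α, hα, ?_, ?_⟩)⟩ <;> simp

theorem newtonDist_le_of_mem_taylorSupport {α : ℕ × ℕ} (hα : α ∈ taylorSupport f) :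
    newtonDist f ≤ max α.1 α.2 :=
  csInf_le ⟨0, fun _ ht => ht.1.le⟩ (max_mem_newtonDist_set hα)

theorem le_newtonDist_of_le_add {a b c : ℝ} (ha : 0 ≤ a) (hb : 0 ≤ b) (hab : 0 < a + b)
    (hsupp : ∀ α ∈ taylorSupport f, c ≤ a * α.1 + b * α.2)
    (hne : (taylorSupport f).Nonempty) : c / (a + b) ≤ newtonDist f := by
  have hN : newtonPolygon f ⊆ {t | c ≤ a * t.1 + b * t.2} := by
    refine convexHull_min (iUnion₂_subset fun α hα t ht => ?_) ?_
    · have := hsupp α hα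
      simp only [mem_ofPred_eq] at ht ⊢
      nlinarith [ht.1, ht.2]
    · exact (convex_halfSpace_ge (f := fun t : ℝ × ℝ => a * t.1 + b * t.2)
        ⟨fun x y => by simp; ring, fun r x => by simp; ring⟩ c)
  obtain ⟨α, hα⟩ := hne
  refine le_csInf ⟨_, max_mem_newtonDist_set hα⟩ fun t ht => ?_
  rw [div_le_iff₀ hab]
  have := hN ht.2
  simp only [mem_ofPred_eq] at this
  linarith

end NewtonPolygon

theorem fifteen_div_seven_le_newtonDist {g : ℝ × ℝ → ℝ}
    (hlow : ∀ α : ℕ × ℕ, α.1 + α.2 ≤ 3 → pD α g 0 = 0)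
    (h40 : pD (4, 0) g 0 = 0) (h31 : pD (3, 1) g 0 = 0) (h22 : pD (2, 2) g 0 = 0)
    (hne : pD (1, 3) g 0 ≠ 0 ∨ pD (0, 4) g 0 ≠ 0) : 15 / 7 ≤ newtonDist g := by
  have hsupp : ∀ α ∈ taylorSupport g, (15 : ℝ) ≤ 3 * α.1 + 4 * α.2 := by
    rintro ⟨i, j⟩ ⟨-, hij⟩
    by_contra! hlt
    have hlt' : 3 * i + 4 * j < 15 := by exact_mod_cast hlt
    rcases (by omega : i + j ≤ 3 ∨ (i = 4 ∧ j = 0) ∨ (i = 3 ∧ j = 1) ∨ (i = 2 ∧ j = 2))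
      with h | ⟨rfl, rfl⟩ | ⟨rfl, rfl⟩ | ⟨rfl, rfl⟩
    exacts [hij (hlow _ h), hij h40, hij h31, hij h22]
  have hne' : (taylorSupport g).Nonempty := by
    rcases hne with h | h
    exacts [⟨(1, 3), by simp, h⟩, ⟨(0, 4), by simp, h⟩]
  have := le_newtonDist_of_le_add (by norm_num) (by norm_num) (by norm_num) hsupp hne'
  norm_num at this
  exact this

theorem exists_fifteen_div_seven_le_newtonDist {U : Set (ℝ × ℝ)} {f : ℝ × ℝ → ℝ}
    (hf : ContDiffOn ℝ ∞ f U) (hU : IsOpen U) (hU0 : (0 : ℝ × ℝ) ∈ U)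
    (hlow : ∀ α : ℕ × ℕ, α.1 + α.2 ≤ 3 → pD α f 0 = 0) (h4 : homPart f 4 ≠ 0)
    (hn4 : 3 ≤ nmax (homPart f 4)) :
    ∃ L : (ℝ × ℝ) ≃ₗ[ℝ] ℝ × ℝ, 15 / 7 ≤ newtonDist (f ∘ L) := by
  obtain ⟨θ, hθ⟩ := exists_iteratedDeriv_eq_zero_of_le_nmax (k := 3) hn4
  set R := planeRotation θ
  have hR (n : ℕ) : homPart (f ∘ R) n = homPart f n ∘ R :=
    homPart_comp_clm hf hU hU0 R.toContinuousLinearEquiv.toContinuousLinearMap n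
  have hlowR (α : ℕ × ℕ) (hα : α.1 + α.2 ≤ 3) : pD α (f ∘ R) 0 = 0 := by
    refine homPart_eq_zero_iff.1 ?_ α (mem_antidiagonal.2 rfl)
    rw [hR, homPart_eq_zero_iff.2 fun β hβ => hlow β ((mem_antidiagonal.1 hβ).trans_le hα)]
    rfl
  have hcirc : ∀ j < 3, iteratedDeriv j (fun t => homPart (f ∘ R) 4 (cos t, sin t)) 0 = 0 := by
    intro j hj
    simp only [hR, Function.comp_apply, R, planeRotation_cos_sin]
    rw [iteratedDeriv_comp_const_add j (fun t => homPart f 4 (cos t, sin t))]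
    simpa using hθ j hj
  obtain ⟨h40, h31, h22⟩ := pD_eq_zero_of_homPart_four_circle hcirc
  refine ⟨R, fifteen_div_seven_le_newtonDist hlowR h40 h31 h22 ?_⟩
  by_contra! h13
  refine h4 (funext fun x => ?_)
  have hzero : homPart (f ∘ R) 4 = 0 := homPart_eq_zero_iff.2 fun α hα => by
    obtain ⟨i, j⟩ := α
    have hij := mem_antidiagonal.1 hα
    obtain rfl : j = 4 - i := by omega
    have hi : i ≤ 4 := by omega
    interval_cases i
    exacts [h13.2, h13.1, h22, h31, h40]
  simpa [hR] using congrFun hzero (R.symm x)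

theorem isBigO_norm_smul_pow {E : Type*} [NormedAddCommGroup E] [NormedSpace ℝ E] (v : E)
    {j n : ℕ} (hj : j ≤ n) :
    (fun t : ℝ => ‖t • v‖ ^ n) =O[𝓝 0] fun t => t ^ j := by
  have hpow : (fun t : ℝ => t ^ n) =O[𝓝 0] fun t => t ^ j := by
    rcases hj.eq_or_lt with rfl | hlt
    exacts [isBigO_refl _ _, (isLittleO_pow_pow hlt).isBigO]
  have hnorm : (fun t : ℝ => ‖t • v‖ ^ n) = fun t => ‖v‖ ^ n * ‖t ^ n‖ := by
    ext t
    rw [norm_smul, norm_pow, mul_pow, mul_comm]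
  rw [hnorm]
  exact ((isBigO_refl _ _).norm_left.const_mul_left _).trans hpow

section Flatness

variable {U : Set (ℝ × ℝ)} {f : ℝ × ℝ → ℝ}

theorem isLittleO_pow_of_pD_eq_zero (hf : ContDiffOn ℝ ∞ f U) (hU : IsOpen U)
    (hU0 : (0 : ℝ × ℝ) ∈ U) (k : ℕ) (h : ∀ α : ℕ × ℕ, α.1 + α.2 ≤ k → pD α f 0 = 0) :
    f =o[𝓝 0] fun x => ‖x‖ ^ k := by
  induction k generalizing f with
  | zero =>
    simp only [pow_zero, isLittleO_one_iff]
    have := (hf.continuousOn.continuousAt (hU.mem_nhds hU0)).tendsto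
    rwa [show f 0 = 0 from h 0 le_rfl] at this
  | succ k ih =>
    have h1 : pd1 f =o[𝓝 0] fun x => ‖x‖ ^ k :=
      ih (contDiffOn_dirDeriv hf hU _) fun α hα =>
        (pD_pd1 hf hU α.1 α.2 hU0).trans (h (α.1 + 1, α.2) (by simp only; omega))
    have h2 : pd2 f =o[𝓝 0] fun x => ‖x‖ ^ k :=
      ih (contDiffOn_dirDeriv hf hU _) fun α hα =>
        (congrFun (pD_pd2 α.1 α.2) 0).trans (h (α.1, α.2 + 1) (by simp only; omega))
    have hd : fderiv ℝ f =o[𝓝 0] fun x => ‖x‖ ^ k := by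
      have hc (c : (ℝ × ℝ) →L[ℝ] ℝ) : (fun _ : ℝ × ℝ => c) =O[𝓝 0] fun _ => (1 : ℝ) :=
        isBigO_const_const c one_ne_zero _
      rw [funext (fderiv_eq_pd f)]
      simpa using (h1.smul_isBigO (hc _)).add (h2.smul_isBigO (hc _))
    obtain ⟨r, hr, hball⟩ := Metric.isOpen_iff.1 hU 0 hU0
    have hnhds : 𝓝[ball (0 : ℝ × ℝ) r] 0 = 𝓝 0 := nhdsWithin_eq_nhds.2 (ball_mem_nhds 0 hr)
    have := (convex_ball (0 : ℝ × ℝ) r).isLittleO_pow_succ (mem_ball_self hr)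
      (fun x hx => (hf.differentiableAt_of_isOpen hU (hball hx)).hasFDerivAt.hasFDerivWithinAt)
      (by simpa [hnhds] using hd)
    simpa [hnhds, show f 0 = 0 from h 0 (Nat.zero_le _)] using this

theorem iteratedDeriv_eq_zero_of_isLittleO_pow {ψ : ℝ → ℝ} {s : Set ℝ} (hs : IsOpen s)
    (hsc : Convex ℝ s) (hs0 : (0 : ℝ) ∈ s) {n : ℕ} (hψ : ContDiffOn ℝ n ψ s)
    (hlow : ∀ j < n, iteratedDeriv j ψ 0 = 0) (h : ψ =o[𝓝 0] fun t => t ^ n) :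
    iteratedDeriv n ψ 0 = 0 := by
  have htaylor : taylorWithinEval ψ n s 0
      = fun t => (n.factorial : ℝ)⁻¹ * iteratedDeriv n ψ 0 * t ^ n := by
    ext t
    rw [taylor_within_apply, Finset.sum_range_succ, Finset.sum_eq_zero fun j hj => ?_]
    · simp only [iteratedDerivWithin_of_isOpen hs hs0, sub_zero, smul_eq_mul, zero_add]
      ring
    · rw [iteratedDerivWithin_of_isOpen hs hs0, hlow j (Finset.mem_range.1 hj), smul_zero]
  have hrem := taylor_isLittleO hsc hs0 hψ
  rw [nhdsWithin_eq_nhds.2 (hs.mem_nhds hs0), htaylor] at hrem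
  simp only [sub_zero] at hrem
  have hmain := h.sub hrem
  simp only [sub_sub_cancel] at hmain
  by_contra hne
  rw [isLittleO_const_mul_left_iff (by positivity)] at hmain
  exact isLittleO_irrefl ((eventually_nhdsWithin_of_forall (s := {0}ᶜ) (a := 0)
    fun t ht => pow_ne_zero n ht).frequently.filter_mono nhdsWithin_le_nhds) hmain

theorem homPart_eq_zero_of_isLittleO (hf : ContDiffOn ℝ ∞ f U) (hU : IsOpen U)
    (hU0 : (0 : ℝ × ℝ) ∈ U) {n : ℕ} (h : f =o[𝓝 0] fun x => ‖x‖ ^ n) {j : ℕ} (hj : j ≤ n) :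
    homPart f j = 0 := by
  induction j using Nat.strong_induction_on with
  | _ j ih =>
  obtain ⟨r, hr, hball⟩ := Metric.isOpen_iff.1 hU 0 hU0
  ext v
  have hray (i : ℕ) :
      iteratedDeriv i (fun t : ℝ => f (t • v)) 0 = i.factorial * homPart f i v := by
    rw [iteratedDeriv_comp_smul hf hU v i (by simpa using hU0), zero_smul,
      homPart_eq_iterate_dirDeriv hf hU hU0]
    field_simp
  have hψ : ContDiffOn ℝ j (fun t : ℝ => f (t • v)) ((fun t : ℝ => t • v) ⁻¹' ball 0 r) :=
    (hf.comp (contDiff_id.smul contDiff_const).contDiffOn fun t ht => hball ht).of_le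
      (by exact_mod_cast le_top)
  have hlow (i : ℕ) (hi : i < j) : iteratedDeriv i (fun t : ℝ => f (t • v)) 0 = 0 := by
    rw [hray, ih i hi (hi.le.trans hj)]
    simp
  have hsmall : (fun t : ℝ => f (t • v)) =o[𝓝 0] fun t : ℝ => t ^ j :=
    (h.comp_tendsto ((continuous_id.smul continuous_const).tendsto' 0 0 (by simp))).trans_isBigO
      (isBigO_norm_smul_pow v hj)
  have := iteratedDeriv_eq_zero_of_isLittleO_pow
    (isOpen_ball.preimage (continuous_id.smul continuous_const))
    ((convex_ball 0 r).linear_preimage (LinearMap.toSpanSingleton ℝ _ v))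
    (by simpa using hr) hψ hlow hsmall
  rw [hray] at this
  simpa [Nat.factorial_ne_zero] using this

end Flatness

theorem IsLocalCoordChange.isLittleO_of_comp {y : ℝ × ℝ → ℝ × ℝ} (hy : IsLocalCoordChange y)
    {f : ℝ × ℝ → ℝ} {k : ℕ} (h : (f ∘ y) =o[𝓝 0] fun x => ‖x‖ ^ k) :
    f =o[𝓝 0] fun x => ‖x‖ ^ k := by
  obtain ⟨hy0, U, V, -, hV, hU0, hV0, -, -, z, hz, -, hzy, hyz⟩ := hy
  have hz0 : z 0 = 0 := by simpa [hy0] using hzy 0 hU0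
  have hzd : DifferentiableAt ℝ z 0 := hz.differentiableAt_of_isOpen hV hV0
  have hfz : (f ∘ y) ∘ z =ᶠ[𝓝 0] f :=
    Filter.eventually_of_mem (hV.mem_nhds hV0) fun x hx => by simp [hyz x hx]
  have hzO : (fun x => ‖z x‖ ^ k) =O[𝓝 0] fun x => ‖x‖ ^ k := by
    simpa [hz0] using hzd.hasFDerivAt.isBigO_sub.norm_norm.pow k
  have hzt : Tendsto z (𝓝 0) (𝓝 0) := by simpa [hz0] using hzd.continuousAt.tendsto
  exact ((h.comp_tendsto hzt).trans_isBigO hzO).congr' hfz (EventuallyEq.refl _ _)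

theorem LinearEquiv.isLocalCoordChange (L : (ℝ × ℝ) ≃ₗ[ℝ] ℝ × ℝ) : IsLocalCoordChange L :=
  ⟨map_zero L, univ, univ, isOpen_univ, isOpen_univ, mem_univ _, mem_univ _,
    L.toContinuousLinearEquiv.contDiff.contDiffOn, mapsTo_univ _ _, L.symm,
    L.symm.toContinuousLinearEquiv.contDiff.contDiffOn, mapsTo_univ _ _,
    fun x _ => L.symm_apply_apply x, fun x _ => L.apply_symm_apply x⟩

theorem newtonDist_comp_le_of_homPart_ne_zero {U : Set (ℝ × ℝ)} {f : ℝ × ℝ → ℝ}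
    (hf : ContDiffOn ℝ ∞ f U) (hU : IsOpen U) (hU0 : (0 : ℝ × ℝ) ∈ U) (hf0 : f 0 = 0)
    {n : ℕ} (hn : homPart f n ≠ 0) {y : ℝ × ℝ → ℝ × ℝ} (hy : IsLocalCoordChange y) :
    newtonDist (f ∘ y) ≤ n := by
  suffices ∃ α ∈ taylorSupport (f ∘ y), α.1 + α.2 ≤ n by
    obtain ⟨α, hα, hle⟩ := this
    exact (newtonDist_le_of_mem_taylorSupport hα).trans
      (by exact_mod_cast max_le (by omega) (by omega))
  by_contra! hsupp
  obtain ⟨hy0, Uy, -, hUy, -, hUy0, -, hys, -⟩ := id hy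
  have hW : IsOpen (Uy ∩ y ⁻¹' U) := hys.continuousOn.isOpen_inter_preimage hUy hU
  have hW0 : (0 : ℝ × ℝ) ∈ Uy ∩ y ⁻¹' U := ⟨hUy0, by simpa [hy0] using hU0⟩
  have hfy : ContDiffOn ℝ ∞ (f ∘ y) (Uy ∩ y ⁻¹' U) :=
    hf.comp (hys.mono inter_subset_left) fun x hx => hx.2
  have hflat (α : ℕ × ℕ) (hα : α.1 + α.2 ≤ n) : pD α (f ∘ y) 0 = 0 := by
    by_cases h0 : α = 0
    · subst h0
      simpa [pD, hy0] using hf0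
    · by_contra hne
      exact (hsupp α ⟨h0, hne⟩).not_ge hα
  exact hn (homPart_eq_zero_of_isLittleO hf hU hU0
    (hy.isLittleO_of_comp (isLittleO_pow_of_pD_eq_zero hfy hW hW0 n hflat)) le_rfl)

/-- if all derivatives of `ϕ` of order `≤ 3` vanish at `0`, `ϕ₄ ≢ 0` and
`𝔫(ϕ₄) ≥ 3`, then `h_lin(ϕ) > 2`, hence `h(ϕ) > 2`. -/
theorem stmt18 (ϕ : ℝ × ℝ → ℝ) (hsm : ∃ U ∈ 𝓝 (0 : ℝ × ℝ), ContDiffOn ℝ (⊤ : ℕ∞) ϕ U)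
    (hrank : ∀ α : ℕ × ℕ, α.1 + α.2 ≤ 3 → pD α ϕ 0 = 0)
    (h4 : homPart ϕ 4 ≠ 0) (hn4 : 3 ≤ nmax (homPart ϕ 4)) :
    2 < linHeight ϕ ∧ 2 < height ϕ := by
  obtain ⟨U, hU, hϕ⟩ := hsm
  obtain ⟨V, hVU, hV, hV0⟩ := _root_.mem_nhds_iff.1 hU
  replace hϕ := hϕ.mono hVU
  obtain ⟨L, hL⟩ := exists_fifteen_div_seven_le_newtonDist hϕ hV hV0 hrank h4 hn4
  -- `sSup` of a set that is not bounded above is `0`, so the bound `4` is needed.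
  have hbound {y : ℝ × ℝ → ℝ × ℝ} (hy : IsLocalCoordChange y) : newtonDist (ϕ ∘ y) ≤ 4 :=
    newtonDist_comp_le_of_homPart_ne_zero hϕ hV hV0 (hrank 0 (by norm_num)) h4 hy
  have hlin : newtonDist (ϕ ∘ L) ≤ linHeight ϕ :=
    le_csSup ⟨4, by rintro _ ⟨M, rfl⟩; exact hbound M.isLocalCoordChange⟩ ⟨L, rfl⟩
  have hheight : newtonDist (ϕ ∘ L) ≤ height ϕ :=
    le_csSup ⟨4, by rintro _ ⟨y, hy, rfl⟩; exact hbound hy⟩ ⟨L, L.isLocalCoordChange, rfl⟩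
  constructor <;> linarith
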